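/- Let G, H be compact Lie groups, σ ∈ Gⁿ and τ ∈ Hⁿ tuples of commuting torsion elements. Then there is a group isomorphism Λ_{G×H}(σ,τ) ≅ Λ_G(σ) ×_{𝕋ⁿ} Λ_H(τ), where (σ,τ) denotes the tuple ((σ₁,τ₁),...,(σₙ,τₙ)) in (G×H)ⁿ and the right-hand side is the fiber product over the projections π: Λ_G(σ) → 𝕋ⁿ and π: Λ_H(τ) → 𝕋ⁿ. -/

import Mathlib

/-!
`NN σ` is the image of the lattice `ℤⁿ` under `k ↦ (∏ σᵢ ^ kᵢ, -k)`, and this parametrisation is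
injective since the `ℝⁿ`-coordinate recovers `k`. So if `(g, t) ∈ NN σ` and `(h, t) ∈ NN τ`, both
come from the same `k`, and then so does `((g, h), t) ∈ NN (σ, τ)`: the map
`[(g, h), t] ↦ ([g, t], [h, t])` is injective. Both components project to `t mod ℤⁿ`, so it lands
in the fibre product, and it is onto it: if `u - t = k ∈ ℤⁿ`, then `(h, u)` and `(h τᵏ, t)` differ
by an element of `NN τ`.
-/

def CC {G : Type*} [Group G] {n : ℕ} (σ : Fin n → G) : Subgroup G :=
  ⨅ i, Subgroup.centralizer {σ i}

def NN {G : Type*} [Group G] {n : ℕ} (σ : Fin n → G) (hmem : ∀ i, σ i ∈ CC σ) :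
    Subgroup (CC σ × Multiplicative (Fin n → ℝ)) :=
  Subgroup.closure (Set.range fun i =>
    ((⟨σ i, hmem i⟩ : CC σ), Multiplicative.ofAdd (-(Pi.single i 1 : Fin n → ℝ))))

instance NN.normal {G : Type*} [Group G] {n : ℕ} (σ : Fin n → G)
    (hmem : ∀ i, σ i ∈ CC σ) : (NN σ hmem).Normal := by
  have hle : NN σ hmem ≤ Subgroup.center (CC σ × Multiplicative (Fin n → ℝ)) := by
    rw [NN, Subgroup.closure_le]
    rintro _ ⟨i, rfl⟩
    rw [SetLike.mem_coe, Subgroup.mem_center_iff]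
    intro g
    refine Prod.ext (Subtype.ext ?_) (mul_comm _ _)
    have hg : (g.1 : G) ∈ Subgroup.centralizer {σ i} :=
      Subgroup.mem_iInf.mp g.1.2 i
    have h1 := Subgroup.mem_centralizer_singleton_iff.mp hg
    simpa using h1
  refine ⟨fun x hx g => ?_⟩
  have hc := Subgroup.mem_center_iff.mp (hle hx)
  have : g * x * g⁻¹ = x := by rw [hc g]; group
  rw [this]; exact hx

/-- `Λ_G(σ) = (C_G(σ) × ℝⁿ)/⟨(σ₁,-e₁),…,(σₙ,-eₙ)⟩`. -/
abbrev Lam {G : Type*} [Group G] {n : ℕ} (σ : Fin n → G) (hmem : ∀ i, σ i ∈ CC σ) :=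
  (CC σ × Multiplicative (Fin n → ℝ)) ⧸ NN σ hmem

section Torus

variable {ι : Type*}

def negIntCast : (ι → Multiplicative ℤ) →* Multiplicative (ι → ℝ) where
  toFun k := Multiplicative.ofAdd fun i => -((Multiplicative.toAdd (k i) : ℤ) : ℝ)
  map_one' := by ext; simp
  map_mul' k l := by ext; simp; ring

lemma negIntCast_injective : Function.Injective (negIntCast : (ι → Multiplicative ℤ) →* _) :=
  fun k l h => funext fun i => by
    simpa [negIntCast] using congrFun (congrArg Multiplicative.toAdd h) i

noncomputable def toTorus : Multiplicative (ι → ℝ) →* Multiplicative (ι → AddCircle (1 : ℝ)) :=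
  AddMonoidHom.toMultiplicative
    ((QuotientAddGroup.mk' (AddSubgroup.zmultiples (1 : ℝ))).compLeft ι)

lemma ker_toTorus : (toTorus : Multiplicative (ι → ℝ) →* _).ker = negIntCast.range := by
  ext t
  simp only [MonoidHom.mem_ker, MonoidHom.mem_range]
  constructor
  · intro h
    have hcoord (i : ι) : ∃ z : ℤ, z • (1 : ℝ) = t.toAdd i :=
      (AddCircle.coe_eq_zero_iff (1 : ℝ)).mp (congrFun h i)
    choose z hz using hcoord
    refine ⟨fun i => Multiplicative.ofAdd (-z i), ?_⟩
    ext i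
    simp [negIntCast, ← hz i]
  · rintro ⟨k, rfl⟩
    ext i
    simp [negIntCast, toTorus]

end Torus

section Lattice

variable {G G' : Type*} [Group G] [Group G'] {n : ℕ}

lemma mem_CC_iff {σ : Fin n → G} {g : G} : g ∈ CC σ ↔ ∀ i, Commute g (σ i) := by
  simp [CC, Subgroup.mem_iInf, Subgroup.mem_centralizer_singleton_iff, Commute, SemiconjBy]

def nnGen (σ : Fin n → G) (hmem : ∀ i, σ i ∈ CC σ) (i : Fin n) :
    CC σ × Multiplicative (Fin n → ℝ) :=
  (⟨σ i, hmem i⟩, Multiplicative.ofAdd (-(Pi.single i 1 : Fin n → ℝ)))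

lemma nnGen_commute (σ : Fin n → G) (hmem : ∀ i, σ i ∈ CC σ) (i j : Fin n) :
    Commute (nnGen σ hmem i) (nnGen σ hmem j) :=
  Commute.prod (Subtype.ext (mem_CC_iff.mp (hmem i) j)) (Commute.all _ _)

/-- `k ↦ (∏ σᵢ ^ kᵢ, -k)`. -/
def latticeHom (σ : Fin n → G) (hmem : ∀ i, σ i ∈ CC σ) :
    (Fin n → Multiplicative ℤ) →* CC σ × Multiplicative (Fin n → ℝ) :=
  MonoidHom.noncommPiCoprod (fun i => zpowersHom _ (nnGen σ hmem i))
    fun i j _ _ _ => (nnGen_commute σ hmem i j).zpow_zpow _ _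

lemma latticeHom_mulSingle (σ : Fin n → G) (hmem : ∀ i, σ i ∈ CC σ) (i : Fin n)
    (k : Multiplicative ℤ) :
    latticeHom σ hmem (Pi.mulSingle i k) = nnGen σ hmem i ^ k.toAdd :=
  MonoidHom.noncommPiCoprod_mulSingle _ _ _

lemma NN_eq_range_latticeHom (σ : Fin n → G) (hmem : ∀ i, σ i ∈ CC σ) :
    NN σ hmem = (latticeHom σ hmem).range := by
  change Subgroup.closure (Set.range (nnGen σ hmem)) = _
  rw [← Set.iUnion_singleton_eq_range, Subgroup.closure_iUnion]
  refine Eq.trans ?_ (MonoidHom.noncommPiCoprod_range _).symm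
  simp_rw [Subgroup.range_zpowersHom, Subgroup.zpowers_eq_closure]

lemma snd_latticeHom (σ : Fin n → G) (hmem : ∀ i, σ i ∈ CC σ) (k : Fin n → Multiplicative ℤ) :
    (latticeHom σ hmem k).2 = negIntCast k := by
  change ((MonoidHom.snd _ _).comp (latticeHom σ hmem)) k = negIntCast k
  congr 1
  refine MonoidHom.pi_ext fun i k => ?_
  rw [MonoidHom.comp_apply, latticeHom_mulSingle]
  ext j
  rcases eq_or_ne j i with rfl | hj
  · simp [nnGen, negIntCast]
  · simp [nnGen, negIntCast, hj]

lemma prodMap_comp_latticeHom {σ : Fin n → G} {σ' : Fin n → G'} {hmem : ∀ i, σ i ∈ CC σ}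
    {hmem' : ∀ i, σ' i ∈ CC σ'} (f : CC σ →* CC σ')
    (hf : ∀ i, f ⟨σ i, hmem i⟩ = ⟨σ' i, hmem' i⟩) :
    (f.prodMap (MonoidHom.id _)).comp (latticeHom σ hmem) = latticeHom σ' hmem' :=
  MonoidHom.pi_ext fun i k => by simp [latticeHom_mulSingle, nnGen, hf]

lemma NN_le_comap_prodMap {σ : Fin n → G} {σ' : Fin n → G'} {hmem : ∀ i, σ i ∈ CC σ}
    {hmem' : ∀ i, σ' i ∈ CC σ'} (f : CC σ →* CC σ')
    (hf : ∀ i, f ⟨σ i, hmem i⟩ = ⟨σ' i, hmem' i⟩) :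
    NN σ hmem ≤ (NN σ' hmem').comap (f.prodMap (MonoidHom.id _)) := by
  rw [NN_eq_range_latticeHom, NN_eq_range_latticeHom, ← prodMap_comp_latticeHom f hf,
    MonoidHom.range_comp]
  exact Subgroup.le_comap_map _ _

end Lattice

section Lam

variable {G G' : Type*} [Group G] [Group G'] {n : ℕ}

noncomputable def lamMap {σ : Fin n → G} {σ' : Fin n → G'} {hmem : ∀ i, σ i ∈ CC σ}
    {hmem' : ∀ i, σ' i ∈ CC σ'} (f : CC σ →* CC σ')
    (hf : ∀ i, f ⟨σ i, hmem i⟩ = ⟨σ' i, hmem' i⟩) : Lam σ hmem →* Lam σ' hmem' :=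
  QuotientGroup.map _ _ (f.prodMap (MonoidHom.id _)) (NN_le_comap_prodMap f hf)

noncomputable def lamToTorus (σ : Fin n → G) (hmem : ∀ i, σ i ∈ CC σ) :
    Lam σ hmem →* Multiplicative (Fin n → AddCircle (1 : ℝ)) :=
  QuotientGroup.lift _ (toTorus.comp (MonoidHom.snd _ _)) <| by
    rw [NN_eq_range_latticeHom]
    rintro _ ⟨k, rfl⟩
    rw [MonoidHom.mem_ker, MonoidHom.comp_apply, MonoidHom.coe_snd, snd_latticeHom,
      ← MonoidHom.mem_ker, ker_toTorus]
    exact ⟨k, rfl⟩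

lemma lamToTorus_lamMap {σ : Fin n → G} {σ' : Fin n → G'} {hmem : ∀ i, σ i ∈ CC σ}
    {hmem' : ∀ i, σ' i ∈ CC σ'} (f : CC σ →* CC σ')
    (hf : ∀ i, f ⟨σ i, hmem i⟩ = ⟨σ' i, hmem' i⟩) (x : Lam σ hmem) :
    lamToTorus σ' hmem' (lamMap f hf x) = lamToTorus σ hmem x := by
  induction x using QuotientGroup.induction_on
  rfl

end Lam

section Product

variable {G H : Type*} [Group G] [Group H] {n : ℕ} {σ : Fin n → G} {τ : Fin n → H}

lemma mem_CC_pair_iff {g : G} {h : H} :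
    (g, h) ∈ CC (fun j => (σ j, τ j)) ↔ g ∈ CC σ ∧ h ∈ CC τ := by
  simp only [mem_CC_iff, Prod.commute_iff, forall_and]

variable (σ τ) in
def ccPairEquiv : CC (fun j => (σ j, τ j)) ≃* CC σ × CC τ where
  toFun c := (⟨c.1.1, (mem_CC_pair_iff.mp c.2).1⟩, ⟨c.1.2, (mem_CC_pair_iff.mp c.2).2⟩)
  invFun p := ⟨(p.1, p.2), mem_CC_pair_iff.mpr ⟨p.1.2, p.2.2⟩⟩
  map_mul' _ _ := rfl

variable (σ τ) in
def ccFst : CC (fun j => (σ j, τ j)) →* CC σ :=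
  (MonoidHom.fst _ _).comp (ccPairEquiv σ τ).toMonoidHom

variable (σ τ) in
def ccSnd : CC (fun j => (σ j, τ j)) →* CC τ :=
  (MonoidHom.snd _ _).comp (ccPairEquiv σ τ).toMonoidHom

variable (hmemσ : ∀ i, σ i ∈ CC σ) (hmemτ : ∀ i, τ i ∈ CC τ)
  (hmemP : ∀ i, (σ i, τ i) ∈ CC (fun j => (σ j, τ j)))

noncomputable def lamPairHom :
    Lam (fun j => (σ j, τ j)) hmemP →* Lam σ hmemσ × Lam τ hmemτ :=
  (lamMap (ccFst σ τ) fun _ => rfl).prod (lamMap (ccSnd σ τ) fun _ => rfl)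

lemma lamToTorus_fst_lamPairHom (x : Lam (fun j => (σ j, τ j)) hmemP) :
    lamToTorus σ hmemσ (lamPairHom hmemσ hmemτ hmemP x).1 =
      lamToTorus τ hmemτ (lamPairHom hmemσ hmemτ hmemP x).2 :=
  (lamToTorus_lamMap _ _ x).trans (lamToTorus_lamMap _ _ x).symm

lemma mem_NN_pair {c : CC (fun j => (σ j, τ j))} {t : Multiplicative (Fin n → ℝ)}
    (hσ : (ccFst σ τ c, t) ∈ NN σ hmemσ) (hτ : (ccSnd σ τ c, t) ∈ NN τ hmemτ) :
    (c, t) ∈ NN (fun j => (σ j, τ j)) hmemP := by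
  rw [NN_eq_range_latticeHom] at hσ hτ ⊢
  obtain ⟨k, hk⟩ := hσ
  obtain ⟨k', hk'⟩ := hτ
  obtain rfl : k = k' := negIntCast_injective <| by
    rw [← snd_latticeHom σ hmemσ, ← snd_latticeHom τ hmemτ, hk, hk']
  have hfst := DFunLike.congr_fun
    (prodMap_comp_latticeHom (ccFst σ τ) (hmem := hmemP) (hmem' := hmemσ) fun _ => rfl) k
  have hsnd := DFunLike.congr_fun
    (prodMap_comp_latticeHom (ccSnd σ τ) (hmem := hmemP) (hmem' := hmemτ) fun _ => rfl) k
  rw [MonoidHom.comp_apply, hk] at hfst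
  rw [MonoidHom.comp_apply, hk'] at hsnd
  have hc : (latticeHom _ hmemP k).1 = c :=
    (ccPairEquiv σ τ).injective (Prod.ext (Prod.ext_iff.mp hfst).1 (Prod.ext_iff.mp hsnd).1)
  exact ⟨k, Prod.ext hc (Prod.ext_iff.mp hfst).2⟩

lemma lamPairHom_injective : Function.Injective (lamPairHom hmemσ hmemτ hmemP) := by
  rw [injective_iff_map_eq_one]
  intro x hx
  induction x using QuotientGroup.induction_on with | H y => ?_
  obtain ⟨hσ, hτ⟩ := Prod.ext_iff.mp hx
  rw [QuotientGroup.eq_one_iff]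
  exact mem_NN_pair hmemσ hmemτ hmemP ((QuotientGroup.eq_one_iff _).mp hσ)
    ((QuotientGroup.eq_one_iff _).mp hτ)

lemma exists_lamPairHom_eq {x : Lam σ hmemσ} {y : Lam τ hmemτ}
    (hxy : lamToTorus σ hmemσ x = lamToTorus τ hmemτ y) :
    ∃ z, lamPairHom hmemσ hmemτ hmemP z = (x, y) := by
  induction x using QuotientGroup.induction_on with | H p => ?_
  induction y using QuotientGroup.induction_on with | H q => ?_
  obtain ⟨g, w⟩ := p
  obtain ⟨h, u⟩ := q
  obtain ⟨k, hk⟩ : u⁻¹ * w ∈ negIntCast.range := by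
    rw [← ker_toTorus, MonoidHom.mem_ker, map_mul, map_inv, inv_mul_eq_one]
    exact hxy.symm
  set L := latticeHom τ hmemτ k
  have hL : L ∈ NN τ hmemτ := by
    rw [NN_eq_range_latticeHom]
    exact ⟨k, rfl⟩
  have hshift : (h * L.1, w) = (h, u) * L :=
    Prod.ext rfl (by rw [Prod.snd_mul, snd_latticeHom, hk, mul_inv_cancel_left])
  refine ⟨QuotientGroup.mk ((ccPairEquiv σ τ).symm (g, h * L.1), w), Prod.ext rfl ?_⟩
  change (QuotientGroup.mk (h * L.1, w) : Lam τ hmemτ) = QuotientGroup.mk (h, u)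
  rw [hshift]
  exact QuotientGroup.mk_mul_of_mem _ hL

noncomputable def lamPairEquiv : Lam (fun j => (σ j, τ j)) hmemP ≃
    {p : Lam σ hmemσ × Lam τ hmemτ // lamToTorus σ hmemσ p.1 = lamToTorus τ hmemτ p.2} :=
  Equiv.ofBijective
    (fun x => ⟨lamPairHom hmemσ hmemτ hmemP x, lamToTorus_fst_lamPairHom hmemσ hmemτ hmemP x⟩)
    ⟨fun _ _ hxy => lamPairHom_injective hmemσ hmemτ hmemP (congrArg Subtype.val hxy),
      fun ⟨_, hxy⟩ =>
        let ⟨z, hz⟩ := exists_lamPairHom_eq hmemσ hmemτ hmemP hxy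
        ⟨z, Subtype.ext hz⟩⟩

end Product

theorem stmt16_general {G H : Type*} [Group G] [Group H] {n : ℕ}
    (σ : Fin n → G) (τ : Fin n → H)
    (hmemσ : ∀ i, σ i ∈ CC σ) (hmemτ : ∀ i, τ i ∈ CC τ)
    (hmemP : ∀ i, (σ i, τ i) ∈ CC (fun j => (σ j, τ j))) :
    ∃ (πG : Lam σ hmemσ →* Multiplicative (Fin n → AddCircle (1 : ℝ)))
      (πH : Lam τ hmemτ →* Multiplicative (Fin n → AddCircle (1 : ℝ))),
      (∀ (g : CC σ) (t : Fin n → ℝ),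
        πG (QuotientGroup.mk (g, Multiplicative.ofAdd t)) =
          Multiplicative.ofAdd fun i => ((t i : AddCircle (1 : ℝ)))) ∧
      (∀ (h : CC τ) (t : Fin n → ℝ),
        πH (QuotientGroup.mk (h, Multiplicative.ofAdd t)) =
          Multiplicative.ofAdd fun i => ((t i : AddCircle (1 : ℝ)))) ∧
      ∃ e : Lam (fun j => (σ j, τ j)) hmemP ≃
          {p : Lam σ hmemσ × Lam τ hmemτ // πG p.1 = πH p.2},
        (∀ x y, (e (x * y)).val = (e x).val * (e y).val) ∧
        (∀ (c : CC (fun j => (σ j, τ j)))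
          (hc1 : ((c : G × H)).1 ∈ CC σ) (hc2 : ((c : G × H)).2 ∈ CC τ) (t : Fin n → ℝ),
          (e (QuotientGroup.mk (c, Multiplicative.ofAdd t))).val =
            (QuotientGroup.mk ((⟨(c : G × H).1, hc1⟩ : CC σ), Multiplicative.ofAdd t),
             QuotientGroup.mk ((⟨(c : G × H).2, hc2⟩ : CC τ), Multiplicative.ofAdd t)))  :=
  ⟨lamToTorus σ hmemσ, lamToTorus τ hmemτ, fun _ _ => rfl, fun _ _ => rfl,
    lamPairEquiv hmemσ hmemτ hmemP, map_mul (lamPairHom hmemσ hmemτ hmemP), fun _ _ _ _ => rfl⟩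

/-- Let `G, H` be compact Lie groups and `σ ∈ Gⁿ`, `τ ∈ Hⁿ` tuples of
commuting torsion elements.  Then there is a group isomorphism
`Λ_{G×H}(σ,τ) ≅ Λ_G(σ) ×_{𝕋ⁿ} Λ_H(τ)`, where `(σ,τ)ᵢ = (σᵢ,τᵢ)` and the right-hand side is
the fiber product over the projections `π : Λ_G(σ) → 𝕋ⁿ`, `π : Λ_H(τ) → 𝕋ⁿ`
(`π([g,t]) = t mod ℤⁿ`).  The isomorphism sends `[(g,h),t]` to `([g,t],[h,t])`; it is a
well-defined bijective homomorphism. -/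
theorem stmt16 {G H : Type*} [Group G] [Group H] {n : ℕ}
    (σ : Fin n → G) (τ : Fin n → H)
    (htorsσ : ∀ i, IsOfFinOrder (σ i)) (hcommσ : ∀ i j, Commute (σ i) (σ j))
    (htorsτ : ∀ i, IsOfFinOrder (τ i)) (hcommτ : ∀ i j, Commute (τ i) (τ j))
    (hmemσ : ∀ i, σ i ∈ CC σ) (hmemτ : ∀ i, τ i ∈ CC τ)
    (hmemP : ∀ i, (σ i, τ i) ∈ CC (fun j => (σ j, τ j))) :
    ∃ (πG : Lam σ hmemσ →* Multiplicative (Fin n → AddCircle (1 : ℝ)))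
      (πH : Lam τ hmemτ →* Multiplicative (Fin n → AddCircle (1 : ℝ))),
      (∀ (g : CC σ) (t : Fin n → ℝ),
        πG (QuotientGroup.mk (g, Multiplicative.ofAdd t)) =
          Multiplicative.ofAdd fun i => ((t i : AddCircle (1 : ℝ)))) ∧
      (∀ (h : CC τ) (t : Fin n → ℝ),
        πH (QuotientGroup.mk (h, Multiplicative.ofAdd t)) =
          Multiplicative.ofAdd fun i => ((t i : AddCircle (1 : ℝ)))) ∧
      ∃ e : Lam (fun j => (σ j, τ j)) hmemP ≃
          {p : Lam σ hmemσ × Lam τ hmemτ // πG p.1 = πH p.2},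
        (∀ x y, (e (x * y)).val = (e x).val * (e y).val) ∧
        (∀ (c : CC (fun j => (σ j, τ j)))
          (hc1 : ((c : G × H)).1 ∈ CC σ) (hc2 : ((c : G × H)).2 ∈ CC τ) (t : Fin n → ℝ),
          (e (QuotientGroup.mk (c, Multiplicative.ofAdd t))).val =
            (QuotientGroup.mk ((⟨(c : G × H).1, hc1⟩ : CC σ), Multiplicative.ofAdd t),
             QuotientGroup.mk ((⟨(c : G × H).2, hc2⟩ : CC τ), Multiplicative.ofAdd t))) :=
  stmt16_general σ τ hmemσ hmemτ hmemP
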